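/- arXiv:2309.06699 — 2 statements merged into one kernel-verified Lean document; each statement's English description precedes it below -/
import Mathlib

section
/- Let C be a convex subset of a topological real vector space. Then the face relative interior operation is idempotent: fri(fri C) = fri C. -/
open Pointwise

/-- A face of a convex set `C`: a convex subset `F ⊆ C` such that whenever a point of `F`
lies in the open segment between two points of `C`, both endpoints belong to `F`. -/
def IsFace {X : Type*} [AddCommGroup X] [Module ℝ X] (C F : Set X) : Prop :=
  F ⊆ C ∧ Convex ℝ F ∧
    ∀ x ∈ F, ∀ y ∈ C, ∀ z ∈ C, x ∈ openSegment ℝ y z → y ∈ F ∧ z ∈ F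

/-- The minimal face of `C` containing `x`: the intersection of all faces containing `x`. -/
def minFace {X : Type*} [AddCommGroup X] [Module ℝ X] (C : Set X) (x : X) : Set X :=
  ⋂₀ {F | IsFace C F ∧ x ∈ F}

/-- The conic hull of a set. -/
def coneHull {X : Type*} [AddCommGroup X] [Module ℝ X] (S : Set X) : Set X :=
  {w | ∃ (a : ℝ) (s : X), 0 ≤ a ∧ s ∈ S ∧ w = a • s}

/-- The intrinsic core of a convex set. -/
def icr {X : Type*} [AddCommGroup X] [Module ℝ X] (C : Set X) : Set X :=
  {x ∈ C | ∀ y ∈ C, ∃ z ∈ C, x ∈ openSegment ℝ y z}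

/-- The face relative interior of a convex set in a topological vector space. -/
def fri {X : Type*} [AddCommGroup X] [Module ℝ X] [TopologicalSpace X] (C : Set X) : Set X :=
  {x ∈ C | C ⊆ closure (minFace C x)}

/-!
For convex `C`, the points `y ∈ C` for which the segment from `y` through `x` continues inside
`C` (`x ∈ openSegment y z` with `z ∈ C`) form a face, so every point of `minFace C x` is of this
kind. When `x ∈ fri C`, the whole open segment from `x` to such a `y` lies in `fri C`, and each
of its points `u` sees `x` strictly between `u` and a point of `fri C` (any point strictly between
`x` and `z`), so `u` belongs to every face of `fri C` through `x`. Thus `minFace (fri C) x`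
contains the open segments from `x` to `minFace C x`, and the closure of their union contains
`closure (minFace C x) ⊇ C ⊇ fri C`.
-/

open Set

section Faces

variable {X : Type*} [AddCommGroup X] [Module ℝ X]

lemma mem_openSegment_trans_right_left {a b c x : X} (h₁ : x ∈ openSegment ℝ a b)
    (h₂ : c ∈ openSegment ℝ x b) : x ∈ openSegment ℝ a c := by
  obtain ⟨ta, tb, hta, htb, htab, rfl⟩ := h₁
  obtain ⟨sa, sb, hsa, hsb, hsab, rfl⟩ := h₂
  have hD : 0 < sb + tb * sa := by positivity
  refine ⟨ta * sb / (sb + tb * sa), tb / (sb + tb * sa), by positivity, by positivity, ?_, ?_⟩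
  · field_simp
    linear_combination sb * htab - tb * hsab
  · match_scalars <;> field_simp; ring1

/-- Sliding the far endpoint `z` towards `y` raises its weight in `x` from `q` to any `q' ≥ q`. -/
lemma exists_combo_eq_of_le {C : Set X} (hC : Convex ℝ C) {x y z : X} (hy : y ∈ C) (hz : z ∈ C)
    {p q q' : ℝ} (hq : 0 < q) (hpq : p + q = 1) (hx : p • y + q • z = x) (hqq' : q ≤ q') :
    ∃ z' ∈ C, (1 - q') • y + q' • z' = x := by
  have hq' : 0 < q' := hq.trans_le hqq'
  refine ⟨((q' - q) / q') • y + (q / q') • z,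
    hC hy hz (div_nonneg (by linarith) hq'.le) (by positivity) (by field_simp; ring), ?_⟩
  obtain rfl : p = 1 - q := by linarith
  rw [← hx]
  match_scalars <;> field_simp
  ring

lemma convex_setOf_mem_openSegment {C : Set X} (hC : Convex ℝ C) (x : X) :
    Convex ℝ {y ∈ C | ∃ z ∈ C, x ∈ openSegment ℝ y z} := by
  rintro y₁ ⟨hy₁, z₁, hz₁, p₁, q₁, hp₁, hq₁, hpq₁, hx₁⟩
    y₂ ⟨hy₂, z₂, hz₂, p₂, q₂, hp₂, hq₂, hpq₂, hx₂⟩ a b ha hb hab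
  set q := max q₁ q₂
  have hq : 0 < q := lt_max_of_lt_left hq₁
  have hq1 : q < 1 := max_lt (by linarith) (by linarith)
  obtain ⟨z₁', hz₁', hx₁'⟩ := exists_combo_eq_of_le hC hy₁ hz₁ hq₁ hpq₁ hx₁ (le_max_left _ _)
  obtain ⟨z₂', hz₂', hx₂'⟩ := exists_combo_eq_of_le hC hy₂ hz₂ hq₂ hpq₂ hx₂ (le_max_right _ _)
  refine ⟨hC hy₁ hy₂ ha hb hab, a • z₁' + b • z₂', hC hz₁' hz₂' ha hb hab,
    1 - q, q, by linarith, hq, by ring, ?_⟩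
  calc (1 - q) • (a • y₁ + b • y₂) + q • (a • z₁' + b • z₂')
      = a • ((1 - q) • y₁ + q • z₁') + b • ((1 - q) • y₂ + q • z₂') := by module
    _ = x := by rw [hx₁', hx₂', ← add_smul, hab, one_smul]

lemma isFace_setOf_mem_openSegment {C : Set X} (hC : Convex ℝ C) (x : X) :
    IsFace C {y ∈ C | ∃ z ∈ C, x ∈ openSegment ℝ y z} := by
  refine ⟨fun y hy => hy.1, convex_setOf_mem_openSegment hC x, ?_⟩
  rintro x' ⟨-, w, hw, p, q, hp, hq, hpq, hx⟩ y hy z hz hyz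
  -- `x` is strictly between `y` and a point of `[z, w]`, since `x' ∈ (y, z)` and `x ∈ (x', w)`
  have key : ∀ y z, y ∈ C → z ∈ C → x' ∈ openSegment ℝ y z → ∃ u ∈ C, x ∈ openSegment ℝ y u := by
    rintro y z hy hz ⟨r, s, hr, hs, hrs, rfl⟩
    have hD : 0 < p * s + q := by positivity
    refine ⟨(p * s / (p * s + q)) • z + (q / (p * s + q)) • w,
      hC hz hw (by positivity) (by positivity) (by rw [← add_div, div_self hD.ne']),
      p * r, p * s + q, by positivity, hD, by linear_combination p * hrs + hpq, ?_⟩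
    rw [← hx]
    match_scalars <;> field_simp
  exact ⟨⟨hy, key y z hy hz hyz⟩, ⟨hz, key z y hz hy (openSegment_symm ℝ y z ▸ hyz)⟩⟩

lemma minFace_subset_setOf_mem_openSegment {C : Set X} (hC : Convex ℝ C) {x : X} (hx : x ∈ C) :
    minFace C x ⊆ {y ∈ C | ∃ z ∈ C, x ∈ openSegment ℝ y z} :=
  sInter_subset_of_mem ⟨isFace_setOf_mem_openSegment hC x, hx, x, hx, by simp⟩

lemma mem_minFace_of_mem_openSegment {C : Set X} {x y z : X} (hy : y ∈ C) (hz : z ∈ C)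
    (hx : x ∈ openSegment ℝ y z) : y ∈ minFace C x :=
  mem_sInter.2 fun _ hF => (hF.1.2.2 x hF.2 y hy z hz hx).1

lemma minFace_subset_minFace_of_mem_openSegment {C : Set X} {x z w : X} (hx : x ∈ C) (hz : z ∈ C)
    (hw : w ∈ openSegment ℝ x z) : minFace C x ⊆ minFace C w := fun _ hu =>
  mem_sInter.2 fun F hF => mem_sInter.1 hu F ⟨hF.1, (hF.1.2.2 w hF.2 x hx z hz hw).1⟩

end Faces

section FaceRelativeInterior

variable {X : Type*} [AddCommGroup X] [Module ℝ X] [TopologicalSpace X] {C : Set X}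

lemma mem_fri_of_mem_openSegment (hC : Convex ℝ C) {x z w : X} (hx : x ∈ fri C) (hz : z ∈ C)
    (hw : w ∈ openSegment ℝ x z) : w ∈ fri C :=
  ⟨hC.openSegment_subset hx.1 hz hw,
    hx.2.trans (closure_mono (minFace_subset_minFace_of_mem_openSegment hx.1 hz hw))⟩

lemma openSegment_subset_minFace_fri (hC : Convex ℝ C) {x w : X} (hx : x ∈ fri C)
    (hw : w ∈ minFace C x) : openSegment ℝ x w ⊆ minFace (fri C) x := by
  obtain ⟨hwC, z, hz, hxwz⟩ := minFace_subset_setOf_mem_openSegment hC hx.1 hw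
  intro u hu
  have hz' : midpoint ℝ x z ∈ openSegment ℝ x z := midpoint_mem_openSegment x z
  have hxuz : x ∈ openSegment ℝ u z :=
    openSegment_symm ℝ z u ▸ mem_openSegment_trans_right_left (openSegment_symm ℝ w z ▸ hxwz) hu
  exact mem_minFace_of_mem_openSegment (mem_fri_of_mem_openSegment hC hx hwC hu)
    (mem_fri_of_mem_openSegment hC hx hz hz') (mem_openSegment_trans_right_left hxuz hz')

lemma openSegment_subset_closure_minFace_fri [ContinuousAdd X] [ContinuousConstSMul ℝ X]
    (hC : Convex ℝ C) {x y : X} (hx : x ∈ fri C) (hy : y ∈ closure (minFace C x)) :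
    openSegment ℝ x y ⊆ closure (minFace (fri C) x) := by
  rw [openSegment_eq_image]
  rintro _ ⟨t, ht, rfl⟩
  have hmaps : MapsTo (fun w => (1 - t) • x + t • w) (minFace C x) (minFace (fri C) x) :=
    fun w hw => openSegment_subset_minFace_fri hC hx hw
      ⟨1 - t, t, by linarith [ht.2], ht.1, by ring, rfl⟩
  exact hmaps.closure (by fun_prop) hy

end FaceRelativeInterior

/-- the face relative interior operation is idempotent. -/
theorem fri_idempotent {X : Type*} [AddCommGroup X] [Module ℝ X] [TopologicalSpace X]
    [IsTopologicalAddGroup X] [ContinuousSMul ℝ X]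
    (C : Set X) (hC : Convex ℝ C) : fri (fri C) = fri C := by
  refine Subset.antisymm (fun x hx => hx.1) fun x hx => ⟨hx, fun y hy => ?_⟩
  have hseg := openSegment_subset_closure_minFace_fri hC hx (hx.2 hy.1)
  simpa using closure_mono hseg (segment_subset_closure_openSegment (right_mem_segment ℝ x y))
end

section
/- Let C and D be convex subsets of a topological real vector space X. Then fri C + fri D ⊆ fri(C + D), where + denotes the Minkowski sum. -/
open Pointwise

/-! The minimal face is the intersection of all faces through a point, so it suffices to show that
`c + d` lies in every face `F` of `C + D` through `x + y`, for `c ∈ minFace C x`, `d ∈ minFace D y`.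
Translating `F` back along a set of summands yields faces of the summands: first
`{d ∈ D | x + d ∈ F}` is a face of `D` through `y`, so it contains `minFace D y`; then
`{c ∈ C | ∀ d ∈ minFace D y, c + d ∈ F}` is a face of `C` through `x`, so it contains `minFace C x`.
The closure part follows from continuity of addition. -/

section Faces

variable {X : Type*} [AddCommGroup X] [Module ℝ X]

theorem minFace_subset {C F : Set X} {x : X} (hF : IsFace C F) (hx : x ∈ F) :
    minFace C x ⊆ F :=
  Set.sInter_subset_of_mem ⟨hF, hx⟩

theorem IsFace.setOf_forall_add_right_mem {C D F T : Set X} (hC : Convex ℝ C)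
    (hF : IsFace (C + D) F) (hT : T ⊆ D) : IsFace C {c ∈ C | ∀ d ∈ T, c + d ∈ F} := by
  refine ⟨fun c hc => hc.1, ?_, ?_⟩
  · intro c₁ hc₁ c₂ hc₂ a b ha hb hab
    refine ⟨hC hc₁.1 hc₂.1 ha hb hab, fun d hd => ?_⟩
    have hcomb := hF.2.1 (hc₁.2 d hd) (hc₂.2 d hd) ha hb hab
    rwa [smul_add, smul_add, add_add_add_comm, ← add_smul, hab, one_smul] at hcomb
  · intro c hc u hu v hv hcuv
    have hmem : ∀ d ∈ T, u + d ∈ F ∧ v + d ∈ F := fun d hd =>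
      hF.2.2 _ (hc.2 d hd) _ (Set.add_mem_add hu (hT hd)) _ (Set.add_mem_add hv (hT hd))
        (by simpa only [add_comm _ d] using (mem_openSegment_translate ℝ d).2 hcuv)
    exact ⟨⟨hu, fun d hd => (hmem d hd).1⟩, ⟨hv, fun d hd => (hmem d hd).2⟩⟩

theorem IsFace.setOf_forall_add_left_mem {C D F S : Set X} (hD : Convex ℝ D)
    (hF : IsFace (C + D) F) (hS : S ⊆ C) : IsFace D {d ∈ D | ∀ c ∈ S, c + d ∈ F} := by
  simpa only [add_comm _ (_ : X)] using
    (add_comm C D ▸ hF : IsFace (D + C) F).setOf_forall_add_right_mem hD hS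

theorem add_minFace_subset_minFace_add {C D : Set X} (hC : Convex ℝ C) (hD : Convex ℝ D)
    {x y : X} (hx : x ∈ C) (hy : y ∈ D) :
    minFace C x + minFace D y ⊆ minFace (C + D) (x + y) := by
  rintro _ ⟨c, hc, d, hd, rfl⟩ F ⟨hF, hxyF⟩
  have hDF : minFace D y ⊆ {d ∈ D | ∀ c ∈ ({x} : Set X), c + d ∈ F} :=
    minFace_subset (hF.setOf_forall_add_left_mem hD (Set.singleton_subset_iff.2 hx))
      ⟨hy, by simpa using hxyF⟩
  have hCF : minFace C x ⊆ {c ∈ C | ∀ d ∈ minFace D y, c + d ∈ F} :=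
    minFace_subset (hF.setOf_forall_add_right_mem hC fun d hd => (hDF hd).1)
      ⟨hx, fun d hd => (hDF hd).2 x rfl⟩
  exact (hCF hc).2 d hd

end Faces

theorem fri_add_subset_general {X : Type*} [AddCommGroup X] [Module ℝ X] [TopologicalSpace X]
    [IsTopologicalAddGroup X]
    (C D : Set X) (hC : Convex ℝ C) (hD : Convex ℝ D) :
    fri C + fri D ⊆ fri (C + D) := by
  rintro _ ⟨x, ⟨hxC, hCx⟩, y, ⟨hyD, hDy⟩, rfl⟩
  refine ⟨Set.add_mem_add hxC hyD, ?_⟩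
  rintro _ ⟨c, hc, d, hd, rfl⟩
  have hcd : c + d ∈ closure (minFace C x + minFace D y) :=
    map_mem_closure₂ continuous_add (hCx hc) (hDy hd) fun _ ha _ hb => Set.add_mem_add ha hb
  exact closure_mono (add_minFace_subset_minFace_add hC hD hxC hyD) hcd

/-- `fri C + fri D ⊆ fri (C + D)` (Minkowski sum). -/
theorem fri_add_subset {X : Type*} [AddCommGroup X] [Module ℝ X] [TopologicalSpace X]
    [IsTopologicalAddGroup X] [ContinuousSMul ℝ X]
    (C D : Set X) (hC : Convex ℝ C) (hD : Convex ℝ D) :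
    fri C + fri D ⊆ fri (C + D) :=
  fri_add_subset_general C D hC hD
end
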